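/- For R, R_d ∈ SO(3), the squared norm of the attitude error vector satisfies ‖e_R‖² = Ψ(R,R_d)(2 − Ψ(R,R_d)), where e_R = ((1/2)(R_dᵀR − RᵀR_d))ᵛ and Ψ(R,R_d) = (1/2)·tr(I − R_dᵀR). -/

import Mathlib

open Matrix
noncomputable section

/-- `SO3 R` : `R` is a rotation matrix. -/
def SO3 (R : Matrix (Fin 3) (Fin 3) ℝ) : Prop := Rᵀ * R = 1 ∧ R.det = 1

/-- Attitude error function `Ψ(R,R_d) = ½ tr(I − R_dᵀ R)`. -/
def Psi (R Rd : Matrix (Fin 3) (Fin 3) ℝ) : ℝ := (1/2) * (1 - Rdᵀ * R).trace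

/-- The hat map identifying `ℝ³` with skew-symmetric matrices. -/
def hat (x : Fin 3 → ℝ) : Matrix (Fin 3) (Fin 3) ℝ :=
  !![0, -x 2, x 1; x 2, 0, -x 0; -x 1, x 0, 0]

/-- The vee map, inverse of the hat map on skew-symmetric matrices. -/
def vee (A : Matrix (Fin 3) (Fin 3) ℝ) : Fin 3 → ℝ := ![A 2 1, A 0 2, A 1 0]

/-- Attitude error vector `e_R = (½ (R_dᵀ R − Rᵀ R_d))ᵛ`. -/
def eR (R Rd : Matrix (Fin 3) (Fin 3) ℝ) : Fin 3 → ℝ :=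
  vee ((1/2 : ℝ) • (Rdᵀ * R - Rᵀ * Rd))

/-- Euclidean dot product on `ℝ³`. -/
def dot (x y : Fin 3 → ℝ) : ℝ := ∑ i, x i * y i

/-- Euclidean norm on `ℝ³`. -/
def enorm (x : Fin 3 → ℝ) : ℝ := Real.sqrt (dot x x)

/-- Cross product on `ℝ³`. -/
def cross (x y : Fin 3 → ℝ) : Fin 3 → ℝ :=
  ![x 1 * y 2 - x 2 * y 1, x 2 * y 0 - x 0 * y 2, x 0 * y 1 - x 1 * y 0]

/-!
Put `Q = R_dᵀ R ∈ SO(3)` and `t = tr Q`. Then `e_R` is the vee of the skew part of `Q`, so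
`4‖e_R‖² = ∑_{i≠j} Q_ij² − 2 ∑_{i<j} Q_ij Q_ji`. Orthogonality gives `∑_ij Q_ij² = 3`, and
`adj Q = Qᵀ` (from `det Q = 1`) says each diagonal entry is its complementary principal
`2 × 2` minor, whence `t = ∑_{i<j} (Q_ii Q_jj − Q_ij Q_ji)`. Together with
`t² = ∑ Q_ii² + 2 ∑_{i<j} Q_ii Q_jj` this yields `4‖e_R‖² = (3 − t)(1 + t) = 4 Ψ (2 − Ψ)`,
as `Ψ = (3 − t)/2`.
-/

theorem Matrix.trace_transpose_mul_self_eq_sum_sq {m n α : Type*} [Fintype m] [Fintype n]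
    [Semiring α] (A : Matrix m n α) : (Aᵀ * A).trace = ∑ i, ∑ j, A i j ^ 2 := by
  simp only [trace, diag, mul_apply, transpose_apply, sq]
  exact Finset.sum_comm

theorem dot_self_nonneg (x : Fin 3 → ℝ) : 0 ≤ dot x x :=
  Finset.sum_nonneg fun i _ => mul_self_nonneg (x i)

theorem enorm_sq (x : Fin 3 → ℝ) : _root_.enorm x ^ 2 = dot x x :=
  Real.sq_sqrt (dot_self_nonneg x)

theorem eR_eq_vee_skew (R Rd : Matrix (Fin 3) (Fin 3) ℝ) :
    eR R Rd = vee ((1/2 : ℝ) • (Rdᵀ * R - (Rdᵀ * R)ᵀ)) := by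
  rw [eR, Matrix.transpose_mul, transpose_transpose]

theorem Psi_eq_three_sub_trace_div_two (R Rd : Matrix (Fin 3) (Fin 3) ℝ) :
    Psi R Rd = (3 - (Rdᵀ * R).trace) / 2 := by
  rw [Psi, trace_sub, trace_one, Fintype.card_fin]
  ring

namespace SO3

variable {Q R S : Matrix (Fin 3) (Fin 3) ℝ}

theorem mul_transpose_self (h : SO3 R) : R * Rᵀ = 1 := mul_eq_one_comm.mp h.1

theorem transpose_mul (hR : SO3 R) (hS : SO3 S) : SO3 (Sᵀ * R) := by
  refine ⟨?_, by rw [det_mul, det_transpose, hR.2, hS.2, mul_one]⟩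
  rw [Matrix.transpose_mul, transpose_transpose, Matrix.mul_assoc, ← Matrix.mul_assoc S,
    hS.mul_transpose_self, Matrix.one_mul, hR.1]

theorem adjugate_eq_transpose (h : SO3 Q) : Q.adjugate = Qᵀ :=
  calc Q.adjugate = Q.adjugate * Q * Qᵀ := by rw [Matrix.mul_assoc, h.mul_transpose_self, mul_one]
    _ = Qᵀ := by rw [adjugate_mul, h.2, one_smul, Matrix.one_mul]

theorem trace_eq_sum_principal_minors (h : SO3 Q) :
    Q.trace = (Q 1 1 * Q 2 2 - Q 1 2 * Q 2 1) + (Q 0 0 * Q 2 2 - Q 0 2 * Q 2 0)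
      + (Q 0 0 * Q 1 1 - Q 0 1 * Q 1 0) := by
  rw [← trace_transpose, ← h.adjugate_eq_transpose, trace_fin_three, adjugate_fin_three]
  simp

theorem sum_sq_entries_eq_three (h : SO3 Q) : ∑ i, ∑ j, Q i j ^ 2 = 3 := by
  rw [← Q.trace_transpose_mul_self_eq_sum_sq, h.1, trace_one, Fintype.card_fin, Nat.cast_ofNat]

theorem dot_self_vee_skew (h : SO3 Q) :
    dot (vee ((1/2 : ℝ) • (Q - Qᵀ))) (vee ((1/2 : ℝ) • (Q - Qᵀ))) =
      (3 - Q.trace) * (1 + Q.trace) / 4 := by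
  have hS := h.sum_sq_entries_eq_three
  have hT := h.trace_eq_sum_principal_minors
  simp only [Fin.sum_univ_three] at hS
  rw [trace_fin_three] at hT ⊢
  simp only [dot, vee, Fin.sum_univ_three, Matrix.smul_apply, Matrix.sub_apply, transpose_apply,
    smul_eq_mul, cons_val_zero, cons_val_one, cons_val]
  linear_combination hS / 4 - hT / 2

end SO3

theorem eR_sq_eq (R Rd : Matrix (Fin 3) (Fin 3) ℝ)
    (hR : SO3 R) (hRd : SO3 Rd) :
    _root_.enorm (eR R Rd) ^ 2 = Psi R Rd * (2 - Psi R Rd) := by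
  rw [enorm_sq, eR_eq_vee_skew, (hR.transpose_mul hRd).dot_self_vee_skew,
    Psi_eq_three_sub_trace_div_two]
  ring
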